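/- arXiv:math/0302313 — 2 statements merged into one kernel-verified Lean document; each statement's English description precedes it below -/
import Mathlib

section
/- If H̃_p(Δ_{-(S∪T)}^{S,T}) ≠ 0 with p ≥ 0, then there exists a set S' strictly containing S with H̃_{p-1}(lk_Δ S') ≠ 0. -/
/-!
For a vertex `v`, a complex `Γ` is the union of its deletion `del_v Γ` and the cone
`v ⋆ lk_v Γ`, which meet in `lk_v Γ`. As the cone is acyclic, Mayer–Vietoris shows that a
nonzero class of `Γ` in degree `p` survives in `del_v Γ` in degree `p` or in `lk_v Γ` in
degree `p - 1`, and that a nonzero class of `del_v Γ` survives in `Γ` or in `lk_v Γ`, in the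
same degree.

For `Γ = Δ_R^S = {F ⊆ R : F ∪ S ∈ Δ}` and `v ∈ R`, the deletion is `Δ_{R-v}^S` and the link
is `Δ_{R-v}^{S+v}`. Deleting the vertices of `R` one at a time, the class must at some point
pass to a link, in degree `p - 1`, which adds `v` to `S`: it cannot survive down to `Δ_∅^S`,
which has no faces of dimension `p ≥ 0`. Then the second statement, applied to the vertices
outside `R ∪ S`, carries the class in the same degree to some `Δ_{S'ᶜ}^{S'} = lk_Δ S'`.
-/

open Finset

namespace SCx

variable (k : Type) [Field k] {n : ℕ}

/-- An (abstract) simplicial complex on the vertex set `Fin n`: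
a set of finsets closed under taking subsets. -/
def IsComplex (Δ : Set (Finset (Fin n))) : Prop :=
  ∀ F ∈ Δ, ∀ G ⊆ F, G ∈ Δ

/-- Simplicial `p`-chains with coefficients in `k`: functions on the faces of
cardinality `p+1`. -/
abbrev Chains (Δ : Set (Finset (Fin n))) (p : ℤ) : Type :=
  {F : Finset (Fin n) // F ∈ Δ ∧ (F.card : ℤ) = p + 1} → k

open Classical in
/-- The underlying function of the simplicial boundary map, written via its
transpose formula:
`(∂ f) G = ∑_{x : insert x G ∈ Δ} (-1)^{pos of x in insert x G} f (insert x G)`. -/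
noncomputable def boundaryFun (Δ : Set (Finset (Fin n))) (p : ℤ)
    (f : Chains k Δ p) : Chains k Δ (p - 1) := fun G => ∑ x : Fin n,
  if h : x ∉ G.1 ∧ insert x G.1 ∈ Δ then
    (-1 : k) ^ (G.1.filter (fun y => y < x)).card *
      f ⟨insert x G.1, h.2, by
        have hc := G.2.2
        rw [Finset.card_insert_of_notMem h.1]
        push_cast at hc ⊢
        omega⟩
  else 0

/-- The simplicial boundary map. -/
noncomputable def boundary (Δ : Set (Finset (Fin n))) (p : ℤ) :
    Chains k Δ p →ₗ[k] Chains k Δ (p - 1) where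
  toFun := boundaryFun k Δ p
  map_add' f g := by
    funext G
    unfold boundaryFun
    rw [Pi.add_apply]
    rw [← Finset.sum_add_distrib]
    refine Finset.sum_congr rfl fun x _ => ?_
    split_ifs with h
    · rw [Pi.add_apply]; ring
    · rw [add_zero]
  map_smul' c f := by
    funext G
    unfold boundaryFun
    simp only [RingHom.id_apply, Pi.smul_apply, smul_eq_mul, Finset.mul_sum]
    refine Finset.sum_congr rfl fun x _ => ?_
    split_ifs with h
    · ring
    · rw [mul_zero]

/-- Transport of chains along an equality of degrees. -/
noncomputable def chainsCongr (Δ : Set (Finset (Fin n))) {p q : ℤ} (h : p = q) :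
    Chains k Δ p ≃ₗ[k] Chains k Δ q := by
  subst h; exact LinearEquiv.refl k _

noncomputable def cycles (Δ : Set (Finset (Fin n))) (p : ℤ) : Submodule k (Chains k Δ p) :=
  LinearMap.ker (boundary k Δ p)

noncomputable def boundaries (Δ : Set (Finset (Fin n))) (p : ℤ) : Submodule k (Chains k Δ p) :=
  LinearMap.range ((chainsCongr k Δ (show p + 1 - 1 = p by ring)).toLinearMap ∘ₗ
    boundary k Δ (p + 1))

/-- Reduced simplicial homology of `Δ` in degree `p`, with coefficients in the field `k`,
defined as cycles modulo (boundaries intersected with cycles).  With this convention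
`H̃_{-1}({∅}) = k`. -/
abbrev ReducedHomology (Δ : Set (Finset (Fin n))) (p : ℤ) :=
  ↥(cycles k Δ p) ⧸ (Submodule.comap (cycles k Δ p).subtype (boundaries k Δ p))

/-- The Alexander dual of `Δ`. -/
def dual (Δ : Set (Finset (Fin n))) : Set (Finset (Fin n)) := {F | Fᶜ ∉ Δ}

/-- The restriction `Δ_R` of `Δ` to a vertex subset `R`. -/
def restrict (Δ : Set (Finset (Fin n))) (R : Finset (Fin n)) : Set (Finset (Fin n)) :=
  {F | F ∈ Δ ∧ F ⊆ R}

/-- The link `lk_Δ S`. -/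
def link (Δ : Set (Finset (Fin n))) (S : Finset (Fin n)) : Set (Finset (Fin n)) :=
  {F | Disjoint F S ∧ F ∪ S ∈ Δ}

/-- `Δ_R^{S,T} = {F ⊆ R : F ∪ S ∈ Δ}` (for `T` the complement of `R ∪ S`). -/
def sub (Δ : Set (Finset (Fin n))) (R S : Finset (Fin n)) : Set (Finset (Fin n)) :=
  {F | F ⊆ R ∧ F ∪ S ∈ Δ}

/-- `Δ` has dimension `d - 1`, i.e. `d` is the maximal cardinality of a face. -/
def IsDim (Δ : Set (Finset (Fin n))) (d : ℕ) : Prop :=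
  (∀ F ∈ Δ, F.card ≤ d) ∧ ∃ F ∈ Δ, F.card = d

/-- `Δ` has frame dimension `c - 1`, i.e. `c` is the largest integer such that
every `c`-subset of `[n]` is a face of `Δ`. -/
def IsFrame (Δ : Set (Finset (Fin n))) (c : ℕ) : Prop :=
  (∀ F : Finset (Fin n), F.card ≤ c → F ∈ Δ) ∧
    ∃ F : Finset (Fin n), F.card = c + 1 ∧ F ∉ Δ

/-- A facet: a maximal face. -/
def IsFacet (Δ : Set (Finset (Fin n))) (F : Finset (Fin n)) : Prop :=
  F ∈ Δ ∧ ∀ G ∈ Δ, F ⊆ G → F = G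

variable {k}

section TotalChains

def insertSign (v : Fin n) (F : Finset (Fin n)) : k :=
  (-1) ^ #(F.filter (· < v))

lemma insertSign_mul_self (v : Fin n) (F : Finset (Fin n)) :
    insertSign (k := k) v F * insertSign v F = 1 := by
  rw [insertSign, ← mul_pow, neg_mul_neg, one_mul, one_pow]

lemma insertSign_insert_mul_insertSign_insert {x v : Fin n} {F : Finset (Fin n)}
    (hxv : x ≠ v) (hx : x ∉ F) (hv : v ∉ F) :
    insertSign (k := k) x (insert v F) * insertSign v (insert x F) =
      -(insertSign x F * insertSign v F) := by
  simp only [insertSign, filter_insert]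
  rcases hxv.lt_or_gt with hlt | hlt
  · rw [if_neg (asymm hlt), if_pos hlt, card_insert_of_notMem (by simp [hx]), pow_succ]
    ring
  · rw [if_pos hlt, if_neg (asymm hlt), card_insert_of_notMem (by simp [hv]), pow_succ]
    ring

/-- The simplicial boundary on functions on all finsets, all degrees at once. -/
noncomputable def totalBoundary : (Finset (Fin n) → k) →ₗ[k] (Finset (Fin n) → k) where
  toFun f G := ∑ x ∈ Gᶜ, insertSign x G * f (insert x G)
  map_add' f g := by
    funext G
    simp only [Pi.add_apply, mul_add, sum_add_distrib]
  map_smul' c f := by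
    funext G
    simp only [Pi.smul_apply, smul_eq_mul, RingHom.id_apply, mul_sum]
    exact sum_congr rfl fun _ _ => by ring

lemma totalBoundary_apply (f : Finset (Fin n) → k) (G : Finset (Fin n)) :
    totalBoundary f G = ∑ x ∈ Gᶜ, insertSign x G * f (insert x G) := rfl

variable (v : Fin n)

noncomputable def cone : (Finset (Fin n) → k) →ₗ[k] (Finset (Fin n) → k) where
  toFun f G := if v ∈ G then insertSign v (G.erase v) * f (G.erase v) else 0
  map_add' f g := by
    funext G
    by_cases h : v ∈ G <;> simp [h, mul_add]
  map_smul' c f := by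
    funext G
    by_cases h : v ∈ G <;> simp [h, mul_left_comm]

noncomputable def deletionPart : (Finset (Fin n) → k) →ₗ[k] (Finset (Fin n) → k) where
  toFun f G := if v ∈ G then 0 else f G
  map_add' f g := by
    funext G
    by_cases h : v ∈ G <;> simp [h]
  map_smul' c f := by
    funext G
    by_cases h : v ∈ G <;> simp [h]

/-- The part of `f` on the finsets `G` containing `v`, read (up to sign) as a function of
`G \ {v}`. -/
noncomputable def linkPart : (Finset (Fin n) → k) →ₗ[k] (Finset (Fin n) → k) where
  toFun f F := if v ∈ F then 0 else insertSign v F * f (insert v F)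
  map_add' f g := by
    funext G
    by_cases h : v ∈ G <;> simp [h, mul_add]
  map_smul' c f := by
    funext G
    by_cases h : v ∈ G <;> simp [h, mul_left_comm]

def VertexFree (f : Finset (Fin n) → k) : Prop := ∀ G, v ∈ G → f G = 0

lemma vertexFree_deletionPart (f : Finset (Fin n) → k) : VertexFree v (deletionPart v f) :=
  fun _ hG => if_pos hG

lemma vertexFree_linkPart (f : Finset (Fin n) → k) : VertexFree v (linkPart v f) :=
  fun _ hG => if_pos hG

variable {v}

lemma vertexFree_totalBoundary {f : Finset (Fin n) → k} (hf : VertexFree v f) :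
    VertexFree v (totalBoundary f) :=
  fun G hG => sum_eq_zero fun x _ => by rw [hf _ (mem_insert_of_mem hG), mul_zero]

lemma VertexFree.deletionPart_eq {f : Finset (Fin n) → k} (hf : VertexFree v f) :
    deletionPart v f = f := by
  funext G
  by_cases h : v ∈ G
  · exact (if_pos h).trans (hf G h).symm
  · exact if_neg h

lemma VertexFree.linkPart_eq {f : Finset (Fin n) → k} (hf : VertexFree v f) :
    linkPart v f = 0 := by
  funext F
  by_cases h : v ∈ F
  · exact if_pos h
  · exact (if_neg h).trans (by rw [hf _ (mem_insert_self v F), mul_zero]; rfl)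

lemma deletionPart_cone (f : Finset (Fin n) → k) : deletionPart v (cone v f) = 0 := by
  funext G
  by_cases h : v ∈ G
  · exact if_pos h
  · exact (if_neg h).trans (if_neg h)

lemma cone_apply_insert {F : Finset (Fin n)} (hv : v ∉ F) (f : Finset (Fin n) → k) :
    cone v f (insert v F) = insertSign v F * f F := by
  rw [cone, LinearMap.coe_mk, AddHom.coe_mk, if_pos (mem_insert_self v F), erase_insert hv]

lemma cone_apply_of_notMem {G : Finset (Fin n)} (hv : v ∉ G) (f : Finset (Fin n) → k) :
    cone v f G = 0 :=
  if_neg hv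

lemma VertexFree.linkPart_cone {f : Finset (Fin n) → k} (hf : VertexFree v f) :
    linkPart v (cone v f) = f := by
  funext F
  by_cases h : v ∈ F
  · exact (if_pos h).trans (hf F h).symm
  · change (if v ∈ F then 0 else _) = _
    rw [if_neg h, cone_apply_insert h, ← mul_assoc, insertSign_mul_self, one_mul]

lemma deletionPart_add_cone_linkPart (f : Finset (Fin n) → k) :
    deletionPart v f + cone v (linkPart v f) = f := by
  funext G
  change (if v ∈ G then 0 else f G) + (if v ∈ G then _ * (if v ∈ G.erase v then 0 else _) else 0)
    = f G
  by_cases h : v ∈ G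
  · rw [if_pos h, if_pos h, if_neg (notMem_erase v G), insert_erase h, ← mul_assoc,
      insertSign_mul_self, one_mul, zero_add]
  · rw [if_neg h, if_neg h, add_zero]

lemma VertexFree.totalBoundary_cone {f : Finset (Fin n) → k} (hf : VertexFree v f) :
    totalBoundary (cone v f) = f - cone v (totalBoundary f) := by
  funext G
  by_cases hv : v ∈ G
  · obtain ⟨F, hvF, rfl⟩ : ∃ F, v ∉ F ∧ insert v F = G :=
      ⟨G.erase v, notMem_erase v G, insert_erase hv⟩
    rw [Pi.sub_apply, cone_apply_insert hvF, totalBoundary_apply, totalBoundary_apply,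
      ← add_sum_erase _ _ (mem_compl.2 hvF), hf _ (mem_insert_self v F), mul_zero, zero_add,
      zero_sub, compl_insert, mul_sum, ← sum_neg_distrib]
    refine sum_congr rfl fun x hx => ?_
    obtain ⟨hxv, hxF⟩ := mem_erase.1 hx
    have hvxF : v ∉ insert x F := by simp [hvF, Ne.symm hxv]
    rw [insert_comm, cone_apply_insert hvxF, ← mul_assoc,
      insertSign_insert_mul_insertSign_insert hxv (mem_compl.1 hxF) hvF]
    ring
  · rw [Pi.sub_apply, cone_apply_of_notMem hv, sub_zero, totalBoundary_apply,
      sum_eq_single_of_mem v (mem_compl.2 hv), cone_apply_insert hv, ← mul_assoc,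
      insertSign_mul_self, one_mul]
    intro x _ hxv
    rw [cone_apply_of_notMem (by simp [hv, Ne.symm hxv]), mul_zero]

lemma deletionPart_totalBoundary (f : Finset (Fin n) → k) :
    deletionPart v (totalBoundary f) = totalBoundary (deletionPart v f) + linkPart v f := by
  conv_lhs => rw [← deletionPart_add_cone_linkPart (v := v) f]
  rw [map_add, (vertexFree_linkPart v f).totalBoundary_cone, map_add, map_sub,
    (vertexFree_totalBoundary (vertexFree_deletionPart v f)).deletionPart_eq,
    (vertexFree_linkPart v f).deletionPart_eq, deletionPart_cone, sub_zero]

lemma linkPart_totalBoundary (f : Finset (Fin n) → k) :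
    linkPart v (totalBoundary f) = -totalBoundary (linkPart v f) := by
  conv_lhs => rw [← deletionPart_add_cone_linkPart (v := v) f]
  rw [map_add, (vertexFree_linkPart v f).totalBoundary_cone, map_add, map_sub,
    (vertexFree_totalBoundary (vertexFree_deletionPart v f)).linkPart_eq,
    (vertexFree_linkPart v f).linkPart_eq,
    (vertexFree_totalBoundary (vertexFree_linkPart v f)).linkPart_cone, zero_add, zero_sub]

end TotalChains

section Homology

variable {Δ Γ : Set (Finset (Fin n))} {p : ℤ} {v : Fin n}

/-- The faces of `Δ` of dimension `p`, i.e. with `p + 1` vertices. -/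
def faces (Δ : Set (Finset (Fin n))) (p : ℤ) : Set (Finset (Fin n)) :=
  {F | F ∈ Δ ∧ (F.card : ℤ) = p + 1}

def IsChain (Δ : Set (Finset (Fin n))) (p : ℤ) (f : Finset (Fin n) → k) : Prop :=
  Function.support f ⊆ faces Δ p

def IsBoundary (Δ : Set (Finset (Fin n))) (p : ℤ) (g : Finset (Fin n) → k) : Prop :=
  ∃ u, IsChain Δ (p + 1) u ∧ totalBoundary u = g

variable (k) in
def HasHomology (Δ : Set (Finset (Fin n))) (p : ℤ) : Prop :=
  ∃ g : Finset (Fin n) → k, IsChain Δ p g ∧ totalBoundary g = 0 ∧ ¬ IsBoundary Δ p g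

lemma mem_link_singleton {F : Finset (Fin n)} : F ∈ link Γ {v} ↔ v ∉ F ∧ insert v F ∈ Γ := by
  show Disjoint F {v} ∧ F ∪ {v} ∈ Γ ↔ _
  rw [disjoint_singleton_right, union_singleton]

lemma restrict_subset (R : Finset (Fin n)) : restrict Γ R ⊆ Γ := fun _ h => h.1

lemma link_singleton_subset_restrict (hΓ : IsComplex Γ) (v : Fin n) :
    link Γ {v} ⊆ restrict Γ {v}ᶜ := fun F hF => by
  rw [mem_link_singleton] at hF
  exact ⟨hΓ _ hF.2 _ (subset_insert v F), subset_compl_singleton.2 hF.1⟩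

lemma IsChain.mono {f : Finset (Fin n) → k} (hf : IsChain Δ p f) (h : Δ ⊆ Γ) : IsChain Γ p f :=
  fun _ hF => ⟨h (hf hF).1, (hf hF).2⟩

lemma IsChain.add {f g : Finset (Fin n) → k} (hf : IsChain Δ p f) (hg : IsChain Δ p g) :
    IsChain Δ p (f + g) :=
  (Function.support_add f g).trans (Set.union_subset hf hg)

lemma IsChain.sub {f g : Finset (Fin n) → k} (hf : IsChain Δ p f) (hg : IsChain Δ p g) :
    IsChain Δ p (f - g) :=
  (Function.support_sub f g).trans (Set.union_subset hf hg)

lemma IsChain.vertexFree {f : Finset (Fin n) → k} (hf : IsChain Δ p f) (hΔ : ∀ F ∈ Δ, v ∉ F) :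
    VertexFree v f :=
  fun G hG => Function.notMem_support.1 fun hf' => hΔ G (hf hf').1 hG

lemma isChain_totalBoundary (hΔ : IsComplex Δ) {f : Finset (Fin n) → k} (hf : IsChain Δ p f) :
    IsChain Δ (p - 1) (totalBoundary f) := by
  intro G hG
  obtain ⟨x, hx, hfx⟩ := exists_ne_zero_of_sum_ne_zero hG
  obtain ⟨hface, hcard⟩ := hf (right_ne_zero_of_mul hfx)
  rw [card_insert_of_notMem (mem_compl.1 hx)] at hcard
  exact ⟨hΔ _ hface _ (subset_insert x G), by push_cast at hcard; omega⟩

lemma IsChain.cone {f : Finset (Fin n) → k} (hf : IsChain (link Γ {v}) p f) :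
    IsChain Γ (p + 1) (cone v f) := by
  intro G hG
  by_cases hv : v ∈ G
  · obtain ⟨F, hvF, rfl⟩ : ∃ F, v ∉ F ∧ insert v F = G :=
      ⟨G.erase v, notMem_erase v G, insert_erase hv⟩
    rw [Function.mem_support, cone_apply_insert hvF] at hG
    obtain ⟨hF, hcard⟩ := hf (right_ne_zero_of_mul hG)
    rw [mem_link_singleton] at hF
    refine ⟨hF.2, ?_⟩
    rw [card_insert_of_notMem hvF]
    push_cast
    omega
  · exact absurd (cone_apply_of_notMem hv f) hG

lemma IsChain.linkPart {f : Finset (Fin n) → k} (hf : IsChain Γ p f) :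
    IsChain (link Γ {v}) (p - 1) (linkPart v f) := by
  intro F hF
  change (if v ∈ F then 0 else _) ≠ 0 at hF
  have hv : v ∉ F := fun h => hF (if_pos h)
  rw [if_neg hv] at hF
  obtain ⟨hface, hcard⟩ := hf (right_ne_zero_of_mul hF)
  rw [card_insert_of_notMem hv] at hcard
  exact ⟨mem_link_singleton.2 ⟨hv, hface⟩, by push_cast at hcard; omega⟩

lemma IsChain.deletionPart {f : Finset (Fin n) → k} (hf : IsChain Γ p f) :
    IsChain (restrict Γ {v}ᶜ) p (deletionPart v f) := by
  intro G hG
  change (if v ∈ G then 0 else _) ≠ 0 at hG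
  have hv : v ∉ G := fun h => hG (if_pos h)
  rw [if_neg hv] at hG
  exact ⟨⟨(hf hG).1, subset_compl_singleton.2 hv⟩, (hf hG).2⟩

theorem hasHomology_restrict_or_link (hΓ : IsComplex Γ) (v : Fin n) (h : HasHomology k Γ p) :
    HasHomology k (restrict Γ {v}ᶜ) p ∨ HasHomology k (link Γ {v}) (p - 1) := by
  obtain ⟨g, hg, hgc, hgb⟩ := h
  have hb : totalBoundary (linkPart v g) = 0 := by
    simpa [hgc] using linkPart_totalBoundary (v := v) g
  have hab : totalBoundary (deletionPart v g) + linkPart v g = 0 := by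
    rw [← deletionPart_totalBoundary, hgc, map_zero]
  by_cases hbb : IsBoundary (link Γ {v}) (p - 1) (linkPart v g)
  · obtain ⟨w, hw, hwb⟩ := hbb
    rw [sub_add_cancel] at hw
    left
    refine ⟨deletionPart v g + w,
      hg.deletionPart.add (hw.mono (link_singleton_subset_restrict hΓ v)),
      by rw [map_add, hwb, hab], ?_⟩
    rintro ⟨u, hu, hua⟩
    refine hgb ⟨u - cone v w, (hu.mono (restrict_subset _)).sub hw.cone, ?_⟩
    have hwv : VertexFree v w := hw.vertexFree fun F hF => (mem_link_singleton.1 hF).1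
    rw [map_sub, hua, hwv.totalBoundary_cone, hwb]
    conv_rhs => rw [← deletionPart_add_cone_linkPart (v := v) g]
    abel
  · exact Or.inr ⟨linkPart v g, hg.linkPart, hb, hbb⟩

theorem hasHomology_or_link_of_restrict (hΓ : IsComplex Γ) (v : Fin n)
    (h : HasHomology k (restrict Γ {v}ᶜ) p) :
    HasHomology k Γ p ∨ HasHomology k (link Γ {v}) p := by
  obtain ⟨g, hg, hgc, hgb⟩ := h
  by_cases hgΓ : IsBoundary Γ p g
  · obtain ⟨u, hu, hug⟩ := hgΓ
    have hgv : VertexFree v g :=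
      hg.vertexFree fun F hF => subset_compl_singleton.1 hF.2
    refine Or.inr ⟨linkPart v u, by simpa using hu.linkPart (v := v), ?_, ?_⟩
    · simpa [hug, hgv.linkPart_eq] using linkPart_totalBoundary (v := v) u
    · rintro ⟨t, ht, htb⟩
      refine hgb ⟨deletionPart v u + t,
        hu.deletionPart.add (ht.mono (link_singleton_subset_restrict hΓ v)), ?_⟩
      rw [map_add, htb, ← deletionPart_totalBoundary, hug, hgv.deletionPart_eq]
  · exact Or.inl ⟨g, hg.mono (restrict_subset _), hgc, hgΓ⟩

end Homology

section ReducedHomology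

variable {Δ : Set (Finset (Fin n))} {p : ℤ}

lemma IsChain.apply_eq_zero {f : Finset (Fin n) → k} (hf : IsChain Δ p f) {G : Finset (Fin n)}
    (hG : G ∉ faces Δ p) : f G = 0 :=
  Function.notMem_support.1 fun h => hG (hf h)

noncomputable def extendChain (Δ : Set (Finset (Fin n))) (p : ℤ) :
    Chains k Δ p →ₗ[k] (Finset (Fin n) → k) :=
  Function.ExtendByZero.linearMap k Subtype.val

lemma extendChain_apply_of_mem (z : Chains k Δ p) {G : Finset (Fin n)} (hG : G ∈ faces Δ p) :
    extendChain Δ p z G = z ⟨G, hG⟩ :=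
  Subtype.val_injective.extend_apply z (0 : Finset (Fin n) → k) ⟨G, hG⟩

lemma extendChain_apply_of_notMem (z : Chains k Δ p) {G : Finset (Fin n)}
    (hG : G ∉ faces Δ p) : extendChain Δ p z G = 0 :=
  Function.extend_apply' z (0 : Finset (Fin n) → k) G fun ⟨F, hF⟩ => hG (hF ▸ F.2)

lemma extendChain_injective : Function.Injective (extendChain (k := k) Δ p) :=
  Function.extend_injective Subtype.val_injective (0 : Finset (Fin n) → k)

lemma isChain_extendChain (z : Chains k Δ p) : IsChain Δ p (extendChain Δ p z) :=
  fun _ hG => by_contra fun h => hG (extendChain_apply_of_notMem z h)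

lemma IsChain.extendChain_restrict {g : Finset (Fin n) → k} (hg : IsChain Δ p g) :
    extendChain Δ p (fun F => g F.1) = g := by
  funext G
  by_cases hG : G ∈ faces Δ p
  · exact extendChain_apply_of_mem _ hG
  · rw [extendChain_apply_of_notMem _ hG, hg.apply_eq_zero hG]

lemma extendChain_chainsCongr {q : ℤ} (h : p = q) (z : Chains k Δ p) :
    extendChain Δ q (chainsCongr k Δ h z) = extendChain Δ p z := by
  subst h
  rfl

lemma totalBoundary_extendChain (hΔ : IsComplex Δ) (z : Chains k Δ p) :
    totalBoundary (extendChain Δ p z) = extendChain Δ (p - 1) (boundary k Δ p z) := by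
  funext G
  by_cases hG : G ∈ faces Δ (p - 1)
  · rw [extendChain_apply_of_mem _ hG]
    change _ = boundaryFun k Δ p z ⟨G, hG⟩
    rw [boundaryFun, totalBoundary_apply, ← sum_compl_add_sum G,
      sum_eq_zero (s := G) fun x hx => dif_neg fun h => h.1 hx, add_zero]
    refine sum_congr rfl fun x hx => ?_
    rw [mem_compl] at hx
    by_cases hxG : insert x G ∈ Δ
    · have hcard : ((insert x G).card : ℤ) = p + 1 := by
        rw [card_insert_of_notMem hx]
        have := hG.2
        push_cast
        omega
      rw [dif_pos ⟨hx, hxG⟩, extendChain_apply_of_mem _ ⟨hxG, hcard⟩]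
      rfl
    · rw [dif_neg fun h => hxG h.2, extendChain_apply_of_notMem _ fun h => hxG h.1, mul_zero]
  · rw [extendChain_apply_of_notMem _ hG,
      (isChain_totalBoundary hΔ (isChain_extendChain z)).apply_eq_zero hG]

lemma mem_cycles_iff (hΔ : IsComplex Δ) (z : Chains k Δ p) :
    z ∈ cycles k Δ p ↔ totalBoundary (extendChain Δ p z) = 0 := by
  rw [cycles, LinearMap.mem_ker, totalBoundary_extendChain hΔ,
    map_eq_zero_iff _ extendChain_injective]

lemma mem_boundaries_iff (hΔ : IsComplex Δ) (z : Chains k Δ p) :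
    z ∈ boundaries k Δ p ↔ IsBoundary Δ p (extendChain Δ p z) := by
  rw [boundaries, LinearMap.mem_range]
  constructor
  · rintro ⟨U, rfl⟩
    refine ⟨extendChain Δ (p + 1) U, isChain_extendChain U, ?_⟩
    rw [totalBoundary_extendChain hΔ, LinearMap.comp_apply, LinearEquiv.coe_coe,
      extendChain_chainsCongr]
  · rintro ⟨u, hu, hub⟩
    refine ⟨fun F => u F.1, extendChain_injective ?_⟩
    rw [LinearMap.comp_apply, LinearEquiv.coe_coe, extendChain_chainsCongr,
      ← totalBoundary_extendChain hΔ, hu.extendChain_restrict, hub]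

theorem not_subsingleton_reducedHomology_iff (hΔ : IsComplex Δ) :
    ¬ Subsingleton (ReducedHomology k Δ p) ↔ HasHomology k Δ p := by
  rw [Submodule.Quotient.subsingleton_iff, Submodule.comap_subtype_eq_top,
    SetLike.not_le_iff_exists]
  constructor
  · rintro ⟨z, hzc, hzb⟩
    exact ⟨extendChain Δ p z, isChain_extendChain z, (mem_cycles_iff hΔ z).1 hzc,
      (mem_boundaries_iff hΔ z).not.1 hzb⟩
  · rintro ⟨g, hg, hgc, hgb⟩
    refine ⟨fun F => g F.1, ?_, ?_⟩
    · rwa [mem_cycles_iff hΔ, hg.extendChain_restrict]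
    · rwa [mem_boundaries_iff hΔ, hg.extendChain_restrict]

end ReducedHomology

section Links

variable {Δ : Set (Finset (Fin n))}

lemma IsComplex.sub (hΔ : IsComplex Δ) (R S : Finset (Fin n)) : IsComplex (sub Δ R S) :=
  fun _ hF _ hGF => ⟨hGF.trans hF.1, hΔ _ hF.2 _ (union_subset_union_left hGF)⟩

lemma IsComplex.link (hΔ : IsComplex Δ) (S : Finset (Fin n)) : IsComplex (link Δ S) :=
  fun _ hF _ hGF => ⟨hF.1.mono_left hGF, hΔ _ hF.2 _ (union_subset_union_left hGF)⟩

lemma link_eq_sub (S : Finset (Fin n)) : link Δ S = sub Δ Sᶜ S := by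
  ext F
  exact and_congr_left' subset_compl_iff_disjoint_right.symm

lemma restrict_sub_insert {R : Finset (Fin n)} (S : Finset (Fin n)) {w : Fin n} (hw : w ∉ R) :
    restrict (sub Δ (insert w R) S) {w}ᶜ = sub Δ R S := by
  ext F
  simp only [restrict, sub, Set.mem_ofPred_eq, subset_compl_singleton]
  constructor
  · rintro ⟨⟨hFR, hFS⟩, hwF⟩
    exact ⟨(subset_insert_iff_of_notMem hwF).1 hFR, hFS⟩
  · rintro ⟨hFR, hFS⟩
    exact ⟨⟨hFR.trans (subset_insert w R), hFS⟩, fun h => hw (hFR h)⟩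

lemma link_sub_insert {R : Finset (Fin n)} (S : Finset (Fin n)) {w : Fin n} (hw : w ∉ R) :
    link (sub Δ (insert w R) S) {w} = sub Δ R (insert w S) := by
  ext F
  rw [mem_link_singleton]
  simp only [sub, Set.mem_ofPred_eq]
  rw [insert_union, ← union_insert]
  constructor
  · rintro ⟨hwF, hFR, hFS⟩
    exact ⟨(subset_insert_iff_of_notMem hwF).1 ((subset_insert w F).trans hFR), hFS⟩
  · rintro ⟨hFR, hFS⟩
    exact ⟨fun h => hw (hFR h), insert_subset_insert w hFR, hFS⟩

lemma not_hasHomology_of_faces_eq_empty {p : ℤ} (h : faces Δ p = ∅) : ¬ HasHomology k Δ p := by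
  rintro ⟨g, hg, -, hgb⟩
  have hg0 : g = 0 := funext fun G => hg.apply_eq_zero (h ▸ Set.notMem_empty G)
  exact hgb ⟨0, by simp [IsChain], by rw [map_zero, hg0]⟩

lemma not_hasHomology_sub_empty (S : Finset (Fin n)) {p : ℤ} (hp : 0 ≤ p) :
    ¬ HasHomology k (sub Δ ∅ S) p := by
  refine not_hasHomology_of_faces_eq_empty (Set.eq_empty_iff_forall_notMem.2 ?_)
  rintro F ⟨⟨hF, -⟩, hcard⟩
  rw [subset_empty.1 hF, card_empty, Nat.cast_zero] at hcard
  omega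

theorem exists_superset_hasHomology_link (hΔ : IsComplex Δ) {q : ℤ} {R S : Finset (Fin n)}
    (hRS : Disjoint R S) (h : HasHomology k (sub Δ R S) q) :
    ∃ S', S ⊆ S' ∧ HasHomology k (link Δ S') q := by
  by_cases hfull : R ∪ S = univ
  · rw [IsCompl.eq_compl ⟨hRS, codisjoint_iff.2 hfull⟩, ← link_eq_sub] at h
    exact ⟨S, subset_rfl, h⟩
  obtain ⟨w, hw⟩ : ∃ w, w ∉ R ∪ S := by simpa [eq_univ_iff_forall] using hfull
  have hwR : w ∉ R := fun h => hw (mem_union_left S h)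
  have hwS : w ∉ S := fun h => hw (mem_union_right R h)
  rw [← restrict_sub_insert S hwR] at h
  rcases hasHomology_or_link_of_restrict (hΔ.sub _ _) w h with h | h
  · exact exists_superset_hasHomology_link hΔ (disjoint_insert_left.2 ⟨hwS, hRS⟩) h
  · rw [link_sub_insert S hwR] at h
    obtain ⟨S', hS', h'⟩ :=
      exists_superset_hasHomology_link hΔ (disjoint_insert_right.2 ⟨hwR, hRS⟩) h
    exact ⟨S', (subset_insert w S).trans hS', h'⟩
termination_by #(R ∪ S)ᶜ
decreasing_by
  all_goals
    refine card_lt_card (compl_ssubset_compl.2 ?_)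
    first | rw [insert_union] | rw [union_insert]
    exact ssubset_insert hw

theorem exists_ssuperset_hasHomology_link (hΔ : IsComplex Δ) {p : ℤ} (hp : 0 ≤ p)
    (R : Finset (Fin n)) {S : Finset (Fin n)} (hRS : Disjoint R S)
    (h : HasHomology k (sub Δ R S) p) :
    ∃ S', S ⊂ S' ∧ HasHomology k (link Δ S') (p - 1) := by
  induction R using Finset.induction_on generalizing S with
  | empty => exact absurd h (not_hasHomology_sub_empty S hp)
  | insert v R hvR ih =>
    rw [disjoint_insert_left] at hRS
    rcases hasHomology_restrict_or_link (hΔ.sub _ _) v h with h | h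
    · rw [restrict_sub_insert S hvR] at h
      exact ih hRS.2 h
    · rw [link_sub_insert S hvR] at h
      obtain ⟨S', hS', h'⟩ :=
        exists_superset_hasHomology_link hΔ (disjoint_insert_right.2 ⟨hvR, hRS.2⟩) h
      exact ⟨S', (ssubset_insert hRS.1).trans_le hS', h'⟩

end Links

theorem stmt10_general (k : Type) [Field k] {n : ℕ} (Δ : Set (Finset (Fin n)))
    (hΔ : IsComplex Δ) (S T : Finset (Fin n))
    (p : ℤ) (hp : 0 ≤ p)
    (h : ¬ Subsingleton (ReducedHomology k (sub Δ (S ∪ T)ᶜ S) p)) :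
    ∃ S' : Finset (Fin n), S ⊂ S' ∧
      ¬ Subsingleton (ReducedHomology k (link Δ S') (p - 1)) := by
  rw [not_subsingleton_reducedHomology_iff (hΔ.sub _ _)] at h
  obtain ⟨S', hSS', hS'⟩ :=
    exists_ssuperset_hasHomology_link hΔ hp _ (disjoint_compl_left.mono_right subset_union_left) h
  exact ⟨S', hSS', (not_subsingleton_reducedHomology_iff (hΔ.link S')).2 hS'⟩

/-- if `H̃_p(Δ_{-(S∪T)}^{S,T}) ≠ 0` with `p ≥ 0` then
`H̃_{p-1}(lk_Δ S') ≠ 0` for some `S'` strictly containing `S`. -/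
theorem stmt10 (k : Type) [Field k] {n : ℕ} (Δ : Set (Finset (Fin n)))
    (hΔ : IsComplex Δ) (S T : Finset (Fin n)) (hST : Disjoint S T)
    (p : ℤ) (hp : 0 ≤ p)
    (h : ¬ Subsingleton (ReducedHomology k (sub Δ (S ∪ T)ᶜ S) p)) :
    ∃ S' : Finset (Fin n), S ⊂ S' ∧
      ¬ Subsingleton (ReducedHomology k (link Δ S') (p - 1)) :=
  stmt10_general k Δ hΔ S T p hp h

end SCx
end

section
/- Let Δ be a simplicial complex on [n] of dimension d-1. Δ is in CM_{n-d-1} (i.e., Δ* is (c*+1)-CLeray, equivalently any two distinct facets of Δ* intersect in cardinality < c*) if and only if |F ∪ G| ≥ d + 2 for all distinct missing faces F, G of Δ. -/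
open Finset

namespace SCx

variable (k : Type) [Field k] {n : ℕ}

def IsMissingFace (Δ : Set (Finset (Fin n))) (F : Finset (Fin n)) : Prop :=
  F ∉ Δ ∧ ∀ F' ⊂ F, F' ∈ Δ

theorem isFacet_dual_compl_iff (Δ : Set (Finset (Fin n))) (F : Finset (Fin n)) :
    IsFacet (dual Δ) Fᶜ ↔ IsMissingFace Δ F := by
  simp only [IsFacet, IsMissingFace, dual, Set.mem_ofPred_eq, compl_compl]
  refine and_congr_right fun _ => ?_
  rw [compl_surjective.forall]
  simp only [compl_compl, compl_subset_compl, compl_inj_iff, ssubset_iff_subset_ne]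
  exact forall_congr' fun H => by tauto

theorem card_compl_inter_compl_lt_iff {F G : Finset (Fin n)} {d cs : ℕ}
    (hn : n = d + cs + 1) : #(Fᶜ ∩ Gᶜ) < cs ↔ d + 2 ≤ #(F ∪ G) := by
  have hle : #(F ∪ G) ≤ n := card_le_univ (F ∪ G) |>.trans_eq (Fintype.card_fin n)
  rw [← compl_union, card_compl, Fintype.card_fin]
  omega

theorem stmt17_general {n : ℕ} (Δ : Set (Finset (Fin n)))
    (d cs : ℕ) (hn : n = d + cs + 1) :
    (∀ F G : Finset (Fin n), IsFacet (dual Δ) F → IsFacet (dual Δ) G → F ≠ G →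
        (F ∩ G).card < cs) ↔
    (∀ F G : Finset (Fin n),
        (F ∉ Δ ∧ ∀ F' ⊂ F, F' ∈ Δ) → (G ∉ Δ ∧ ∀ G' ⊂ G, G' ∈ Δ) →
        F ≠ G → d + 2 ≤ (F ∪ G).card) := by
  rw [compl_surjective.forall₂]
  simp only [isFacet_dual_compl_iff, ne_eq, compl_inj_iff, card_compl_inter_compl_lt_iff hn]
  rfl

/-- `Δ` is in `CM_{n-d-1}` (any two distinct facets of `Δ*` meet
in cardinality `< c*`) iff `|F ∪ G| ≥ d + 2` for all distinct missing faces. -/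
theorem stmt17 {n : ℕ} (Δ : Set (Finset (Fin n))) (hΔ : IsComplex Δ)
    (d cs : ℕ) (hd : IsDim Δ d) (hn : n = d + cs + 1) :
    (∀ F G : Finset (Fin n), IsFacet (dual Δ) F → IsFacet (dual Δ) G → F ≠ G →
        (F ∩ G).card < cs) ↔
    (∀ F G : Finset (Fin n),
        (F ∉ Δ ∧ ∀ F' ⊂ F, F' ∈ Δ) → (G ∉ Δ ∧ ∀ G' ⊂ G, G' ∈ Δ) →
        F ≠ G → d + 2 ≤ (F ∪ G).card) :=
  stmt17_general Δ d cs hn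

end SCx
end
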